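/- If the trajectory balance condition Z·P_F(τ) = R(x_τ)·P_B(τ|x_τ) holds for all complete trajectories τ on a finite DAG with unique source and terminal states X (with full-support forward and backward policies and positive reward R), then for every terminal state x the terminating probability satisfies P_F^⊤(x) = R(x)/Z, where Z = Σ_{x'∈X} R(x'). -/

import Mathlib

/-!
By induction down the DAG, the forward probabilities of all complete trajectories sum to 1.
The same argument on the reversed DAG, whose only terminal state is `s0`, shows that the
backward probabilities of the trajectories ending at a fixed terminal state `x` sum to 1.
Trajectory balance says that on those trajectories `P_F(τ) = (R x / Z) · P_B(τ | x)`, hence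
`P_F^⊤(x) = R x / Z`, and summing over `x` gives `Z = ∑ R`.
-/

variable {S : Type}

/-- A terminal state (sink) of the DAG. -/
def IsSink (adj : S → S → Prop) (x : S) : Prop := ∀ y, ¬ adj x y

/-- Product of transition probabilities along a list of states. -/
def fwdProd (P : S → S → ℝ) : List S → ℝ
  | a :: b :: rest => P a b * fwdProd P (b :: rest)
  | _ => 1

/-- `P_B(τ|x)`: product of backward transition probabilities along a trajectory,
where `PB s' s` is the probability of parent `s` given state `s'`. -/
def bwdProd (PB : S → S → ℝ) (L : List S) : ℝ := fwdProd (fun a b => PB b a) L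

/-- A complete trajectory: starts at `s0`, follows edges, and ends at a sink. -/
def IsCompleteTraj (adj : S → S → Prop) (s0 : S) (L : List S) : Prop :=
  L.head? = some s0 ∧ L.Chain' adj ∧ ∃ x, L.getLast? = some x ∧ IsSink adj x

def trajEnd (s0 : S) (L : List S) : S := L.getLast?.getD s0

/-- Marginal terminating probability at `x`: sum of `P_F(τ)` over complete trajectories
ending at `x`. -/
noncomputable def PFtop (adj : S → S → Prop) (s0 : S) (PF : S → S → ℝ) (x : S) : ℝ :=
  ∑ᶠ L ∈ {L : List S | IsCompleteTraj adj s0 L ∧ L.getLast? = some x}, fwdProd PF L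

/-- A forward policy: distributions over children of non-sink states. -/
def IsFwdPolicy [Fintype S] (adj : S → S → Prop) (PF : S → S → ℝ) : Prop :=
  (∀ s s', 0 ≤ PF s s') ∧ (∀ s s', ¬ adj s s' → PF s s' = 0) ∧
  (∀ s, ¬ IsSink adj s → ∑ s', PF s s' = 1)

/-- A backward policy: distributions over parents of non-initial states
(`PB s' s` = probability of parent `s` given `s'`). -/
def IsBwdPolicy [Fintype S] (adj : S → S → Prop) (s0 : S) (PB : S → S → ℝ) : Prop :=
  (∀ s s', 0 ≤ PB s' s) ∧ (∀ s s', ¬ adj s s' → PB s' s = 0) ∧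
  (∀ s', s' ≠ s0 → ∑ s, PB s' s = 1)

def FullSupportBwd (adj : S → S → Prop) (PB : S → S → ℝ) : Prop :=
  ∀ s s', adj s s' → 0 < PB s' s


def FullSupportFwd (adj : S → S → Prop) (PF : S → S → ℝ) : Prop :=
  ∀ s s', adj s s' → 0 < PF s s'

open Relation Set

lemma fwdProd_cons_of_head? (P : S → S → ℝ) {L : List S} {a b : S} (h : L.head? = some b) :
    fwdProd P (a :: L) = P a b * fwdProd P L := by
  match L, h with
  | _ :: _, rfl => rfl

lemma fwdProd_append_singleton (P : S → S → ℝ) {L : List S} {a b : S}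
    (h : L.getLast? = some a) : fwdProd P (L ++ [b]) = fwdProd P L * P a b := by
  induction L with
  | nil => simp at h
  | cons c L ih =>
    match L, h with
    | [], rfl => simp [fwdProd]
    | d :: L, h =>
      rw [List.getLast?_cons_cons] at h
      change P c d * fwdProd P (d :: L ++ [b]) = P c d * fwdProd P (d :: L) * P a b
      rw [ih h, mul_assoc]

lemma fwdProd_reverse (P : S → S → ℝ) (L : List S) :
    fwdProd P L.reverse = fwdProd (flip P) L := by
  induction L with
  | nil => rfl
  | cons a L ih =>
    match L with
    | [] => rfl
    | b :: L =>
      rw [List.reverse_cons, fwdProd_append_singleton P (a := b) (by simp), ih, mul_comm]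
      rfl

section Paths

variable {r : S → S → Prop}

lemma List.IsChain.nodup_of_acyclic (hr : ∀ s, ¬ TransGen r s s) {L : List S}
    (hL : L.IsChain r) : L.Nodup :=
  haveI : Std.Irrefl (TransGen r) := ⟨hr⟩
  (List.isChain_iff_pairwise.1 (hL.imp fun _ _ => TransGen.single)).nodup

lemma wellFounded_flip_of_acyclic [Finite S] (hr : ∀ s, ¬ TransGen r s s) :
    WellFounded (flip r) :=
  haveI : Std.Irrefl (TransGen (flip r)) := ⟨fun s h => hr s (transGen_swap.1 h)⟩
  (Finite.wellFounded_of_trans_of_irrefl _).mono fun _ _ => TransGen.single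

def PathsInto (r : S → S → Prop) (T : Set S) (s : S) : Set (List S) :=
  {L | L.head? = some s ∧ L.IsChain r ∧ ∃ t, L.getLast? = some t ∧ t ∈ T}

lemma pathsInto_finite [Finite S] (hr : ∀ s, ¬ TransGen r s s) (T : Set S) (s : S) :
    (PathsInto r T s).Finite := by
  have := Fintype.ofFinite S
  exact (List.finite_length_le S (Fintype.card S)).subset
    fun _ hL => (hL.2.1.nodup_of_acyclic hr).length_le_card

lemma pathsInto_of_mem {T : Set S} {s : S} (hs : s ∈ T) (hsink : ∀ b, ¬ r s b) :
    PathsInto r T s = {[s]} := by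
  ext L
  constructor
  · rintro ⟨hhead, hchain, -⟩
    match L, hhead with
    | [_], rfl => rfl
    | _ :: b :: _, rfl => exact absurd (List.isChain_cons_cons.1 hchain).1 (hsink b)
  · rintro rfl
    exact ⟨rfl, List.isChain_singleton s, s, rfl, hs⟩

lemma pathsInto_of_notMem {T : Set S} {s : S} (hs : s ∉ T) :
    PathsInto r T s = List.cons s '' ⋃ b ∈ {b | r s b}, PathsInto r T b := by
  ext L
  constructor
  · rintro ⟨hhead, hchain, t, hlast, ht⟩
    match L, hhead with
    | [_], rfl =>
      rw [List.getLast?_singleton, Option.some_inj] at hlast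
      exact absurd (hlast ▸ ht) hs
    | _ :: b :: M, rfl =>
      obtain ⟨hsb, hchain⟩ := List.isChain_cons_cons.1 hchain
      exact ⟨b :: M, mem_biUnion hsb ⟨rfl, hchain, t, hlast, ht⟩, rfl⟩
  · rintro ⟨M, hM, rfl⟩
    obtain ⟨b, hsb, hhead, hchain, t, hlast, ht⟩ := mem_iUnion₂.1 hM
    match M, hhead with
    | _ :: _, rfl =>
      exact ⟨rfl, List.isChain_cons_cons.2 ⟨hsb, hchain⟩, t, hlast, ht⟩

lemma pairwiseDisjoint_pathsInto (T I : Set S) : I.PairwiseDisjoint (PathsInto r T) :=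
  fun _ _ _ _ hab => disjoint_left.2 fun _ ha hb => hab (Option.some.inj (ha.1.symm.trans hb.1))

theorem finsum_fwdProd_pathsInto [Fintype S] (hr : ∀ s, ¬ TransGen r s s) {T : Set S}
    (hT : ∀ t ∈ T, ∀ b, ¬ r t b) {P : S → S → ℝ} (hP0 : ∀ a b, ¬ r a b → P a b = 0)
    (hP1 : ∀ a ∉ T, ∑ b, P a b = 1) (s : S) :
    ∑ᶠ L ∈ PathsInto r T s, fwdProd P L = 1 := by
  induction s using (wellFounded_flip_of_acyclic hr).induction with
  | _ s ih =>
  by_cases hs : s ∈ T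
  · rw [pathsInto_of_mem hs (hT s hs), finsum_mem_singleton]
    rfl
  have hchild : ∀ b ∈ {b | r s b}, ∑ᶠ L ∈ PathsInto r T b, fwdProd P (s :: L) = P s b :=
    fun b hb => by
      rw [finsum_mem_congr rfl fun L hL => fwdProd_cons_of_head? P hL.1, ← mul_finsum_mem,
        ih b hb, mul_one]
  rw [pathsInto_of_notMem hs, finsum_mem_image List.cons_injective.injOn,
    finsum_mem_biUnion (pairwiseDisjoint_pathsInto T _) (toFinite _)
      fun b _ => pathsInto_finite hr T b,
    finsum_mem_congr rfl hchild, ← hP1 s hs]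
  refine finsum_mem_eq_sum_of_inter_support_eq _ (ext fun b => ?_)
  simp only [mem_inter_iff, mem_ofPred_eq, Finset.coe_univ, mem_univ, true_and,
    Function.mem_support, and_iff_right_iff_imp]
  exact not_imp_comm.1 (hP0 s b)

lemma mem_pathsInto_singleton {L : List S} {t s : S} :
    L ∈ PathsInto r {t} s ↔ L.head? = some s ∧ L.IsChain r ∧ L.getLast? = some t :=
  and_congr_right' <| and_congr_right' exists_eq_right

lemma pathsInto_eq_biUnion (T : Set S) (s : S) :
    PathsInto r T s = ⋃ t ∈ T, PathsInto r {t} s := by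
  ext L
  simp only [mem_iUnion₂, mem_pathsInto_singleton, exists_prop]
  constructor
  · rintro ⟨hhead, hchain, t, hlast, ht⟩
    exact ⟨t, ht, hhead, hchain, hlast⟩
  · rintro ⟨t, ht, hhead, hchain, hlast⟩
    exact ⟨hhead, hchain, t, hlast, ht⟩

lemma pairwiseDisjoint_pathsInto_singleton (I : Set S) (s : S) :
    I.PairwiseDisjoint fun t => PathsInto r {t} s :=
  fun _ _ _ _ hab => disjoint_left.2 fun _ ha hb => hab <| Option.some.inj <|
    (mem_pathsInto_singleton.1 ha).2.2.symm.trans (mem_pathsInto_singleton.1 hb).2.2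

lemma reverse_mem_pathsInto_singleton {L : List S} {a b : S} :
    L.reverse ∈ PathsInto r {a} b ↔ L ∈ PathsInto (flip r) {b} a := by
  simp only [mem_pathsInto_singleton, List.head?_reverse, List.getLast?_reverse,
    List.isChain_reverse]
  exact ⟨fun ⟨h₁, h₂, h₃⟩ => ⟨h₃, h₂, h₁⟩, fun ⟨h₁, h₂, h₃⟩ => ⟨h₃, h₂, h₁⟩⟩

end Paths

section TrajectoryBalance

variable {adj : S → S → Prop} {s0 : S}

lemma pFtop_eq_finsum_pathsInto (PF : S → S → ℝ) {x : S} (hx : IsSink adj x) :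
    PFtop adj s0 PF x = ∑ᶠ L ∈ PathsInto adj {x} s0, fwdProd PF L := by
  refine finsum_mem_congr (ext fun L => ?_) fun _ _ => rfl
  rw [mem_pathsInto_singleton]
  exact ⟨fun ⟨⟨h₁, h₂, _⟩, h₃⟩ => ⟨h₁, h₂, h₃⟩, fun ⟨h₁, h₂, h₃⟩ => ⟨⟨h₁, h₂, x, h₃, hx⟩, h₃⟩⟩

lemma finsum_pFtop [Fintype S] (hacyc : ∀ s, ¬ TransGen adj s s) {PF : S → S → ℝ}
    (hPF : IsFwdPolicy adj PF) :
    ∑ᶠ x ∈ {x | IsSink adj x}, PFtop adj s0 PF x = 1 := by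
  rw [← finsum_fwdProd_pathsInto hacyc (T := {x | IsSink adj x}) (fun _ ht => ht) hPF.2.1 hPF.2.2,
    pathsInto_eq_biUnion,
    finsum_mem_biUnion (pairwiseDisjoint_pathsInto_singleton _ _) (toFinite _)
      fun _ _ => pathsInto_finite hacyc _ _]
  exact finsum_mem_congr rfl fun x hx => pFtop_eq_finsum_pathsInto PF hx

lemma finsum_bwdProd_pathsInto [Fintype S] (hacyc : ∀ s, ¬ TransGen adj s s)
    (hs0 : ∀ s, ¬ adj s s0) {PB : S → S → ℝ} (hPB : IsBwdPolicy adj s0 PB) (x : S) :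
    ∑ᶠ L ∈ PathsInto adj {x} s0, bwdProd PB L = 1 := by
  have hrev : PathsInto adj {x} s0 = List.reverse '' PathsInto (flip adj) {s0} x := by
    rw [image_eq_preimage_of_inverse List.reverse_reverse List.reverse_reverse]
    exact ext fun _ => reverse_mem_pathsInto_singleton.symm
  rw [hrev, finsum_mem_image List.reverse_injective.injOn]
  refine (finsum_mem_congr rfl fun L _ => fwdProd_reverse (flip PB) L).trans ?_
  refine finsum_fwdProd_pathsInto (fun s h => hacyc s (transGen_swap.1 h)) ?_
    (fun a b => hPB.2.1 b a) hPB.2.2 x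
  rintro t rfl b
  exact hs0 b

lemma pFtop_eq_div_of_trajectoryBalance [Fintype S] (hacyc : ∀ s, ¬ TransGen adj s s)
    (hs0 : ∀ s, ¬ adj s s0) {PB : S → S → ℝ} (hPB : IsBwdPolicy adj s0 PB)
    {R : S → ℝ} {PF : S → S → ℝ} {Z : ℝ} (hZ : Z ≠ 0)
    (hTB : ∀ L : List S, IsCompleteTraj adj s0 L →
      Z * fwdProd PF L = R (trajEnd s0 L) * bwdProd PB L) {x : S} (hx : IsSink adj x) :
    PFtop adj s0 PF x = R x / Z := by
  rw [pFtop_eq_finsum_pathsInto PF hx, ← mul_one (R x / Z),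
    ← finsum_bwdProd_pathsInto hacyc hs0 hPB x, mul_finsum_mem]
  refine finsum_mem_congr rfl fun L hL => ?_
  obtain ⟨hhead, hchain, hlast⟩ := mem_pathsInto_singleton.1 hL
  have hend : trajEnd s0 L = x := by rw [trajEnd, hlast]; rfl
  rw [div_mul_eq_mul_div, eq_div_iff hZ, mul_comm, hTB L ⟨hhead, hchain, x, hlast, hx⟩, hend]

end TrajectoryBalance

theorem stmt5_general [Fintype S] (adj : S → S → Prop) (s0 : S)
    (hacyc : ∀ s, ¬ Relation.TransGen adj s s)
    (hs0 : ∀ s, ¬ adj s s0)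
    (R : S → ℝ)
    (PF : S → S → ℝ) (hPF : IsFwdPolicy adj PF)
    (PB : S → S → ℝ) (hPB : IsBwdPolicy adj s0 PB)
    (Z : ℝ) (hZ : 0 < Z)
    (hTB : ∀ L : List S, IsCompleteTraj adj s0 L →
      Z * fwdProd PF L = R (trajEnd s0 L) * bwdProd PB L) :
    Z = (∑ᶠ x ∈ {x : S | IsSink adj x}, R x) ∧
    ∀ x, IsSink adj x → PFtop adj s0 PF x = R x / Z := by
  have hPFtop : ∀ x, IsSink adj x → PFtop adj s0 PF x = R x / Z :=
    fun _ => pFtop_eq_div_of_trajectoryBalance hacyc hs0 hPB hZ.ne' hTB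
  refine ⟨?_, hPFtop⟩
  have htotal : ∑ᶠ x ∈ {x | IsSink adj x}, R x * Z⁻¹ = 1 :=
    (finsum_mem_congr rfl hPFtop).symm.trans (finsum_pFtop hacyc hPF)
  rw [← finsum_mem_mul, mul_inv_eq_one₀ hZ.ne'] at htotal
  exact htotal.symm

/-- If the trajectory balance condition `Z·P_F(τ) = R(x_τ)·P_B(τ|x_τ)` holds for all
complete trajectories on a finite DAG with unique source and full-support policies and
positive reward, then `Z = Σ_{x'∈X} R(x')` and every terminal state satisfies
`P_F^⊤(x) = R(x)/Z`. -/
theorem stmt5 [Fintype S] (adj : S → S → Prop) (s0 : S)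
    (hacyc : ∀ s, ¬ Relation.TransGen adj s s)
    (hs0 : ∀ s, ¬ adj s s0)
    (hreach : ∀ s, Relation.ReflTransGen adj s0 s)
    (hterm : ∀ s, ∃ x, Relation.ReflTransGen adj s x ∧ IsSink adj x)
    (R : S → ℝ) (hR : ∀ x, IsSink adj x → 0 < R x)
    (PF : S → S → ℝ) (hPF : IsFwdPolicy adj PF) (hPFfull : FullSupportFwd adj PF)
    (PB : S → S → ℝ) (hPB : IsBwdPolicy adj s0 PB) (hPBfull : FullSupportBwd adj PB)
    (Z : ℝ) (hZ : 0 < Z)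
    (hTB : ∀ L : List S, IsCompleteTraj adj s0 L →
      Z * fwdProd PF L = R (trajEnd s0 L) * bwdProd PB L) :
    Z = (∑ᶠ x ∈ {x : S | IsSink adj x}, R x) ∧
    ∀ x, IsSink adj x → PFtop adj s0 PF x = R x / Z :=
  stmt5_general adj s0 hacyc hs0 R PF hPF PB hPB Z hZ hTB
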